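/- Let T be a bounded linear operator on a Banach space X which is J^mix-class. Then the set A_T^mix = {x ∈ X : J_T^mix(x) = X} is a closed linear subspace of X. -/

import Mathlib

/-!
`J^mix` is a linear relation, so its graph `G ⊆ X × X` is a submodule; it is also closed, being
the lower (Kuratowski) limit of the graphs of `T^n`. If some `x₀` has `J^mix(x₀) = X`, then
`(0, y) = (x₀, y) - (x₀, 0) ∈ G` for all `y`, so `J^mix(x) = X` exactly when `(x, 0) ∈ G`: the
set `A_T^mix` is the preimage of `G` under `x ↦ (x, 0)`.
-/

open Filter Topology

/-- The extended mixing limit set `J_T^mix(x)`: all `y` for which there exists a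
sequence `(x_n)` with `x_n → x` and `T^n x_n → y`. -/
noncomputable def Jmix {X : Type*} [SeminormedAddCommGroup X] [NormedSpace ℂ X]
    (T : X →L[ℂ] X) (x : X) : Set X :=
  {y | ∃ u : ℕ → X, Tendsto u atTop (𝓝 x) ∧ Tendsto (fun n => (T ^ n) (u n)) atTop (𝓝 y)}

open Metric

section LowerLimit

variable {α : Type*} [PseudoMetricSpace α] {s : ℕ → Set α}

theorem exists_tendsto_mem_iff_tendsto_infDist (hs : ∀ n, (s n).Nonempty) (p : α) :
    (∃ u : ℕ → α, (∀ n, u n ∈ s n) ∧ Tendsto u atTop (𝓝 p)) ↔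
      Tendsto (fun n => infDist p (s n)) atTop (𝓝 0) := by
  constructor
  · rintro ⟨u, hus, hu⟩
    refine squeeze_zero (fun _ => infDist_nonneg) (fun n => infDist_le_dist_of_mem (hus n)) ?_
    simpa [dist_comm] using (tendsto_iff_dist_tendsto_zero.1 hu)
  · intro h
    have hlt : ∀ n, ∃ q ∈ s n, dist p q < infDist p (s n) + 1 / (n + 1) := fun n =>
      (infDist_lt_iff (hs n)).1 (lt_add_of_pos_right _ Nat.one_div_pos_of_nat)
    choose u hus hu using hlt
    refine ⟨u, hus, tendsto_iff_dist_tendsto_zero.2 ?_⟩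
    refine squeeze_zero (fun _ => dist_nonneg) (fun n => (dist_comm (u n) p).trans_le (hu n).le) ?_
    simpa using h.add tendsto_one_div_add_atTop_nhds_zero_nat

theorem isClosed_setOf_tendsto_infDist :
    IsClosed {p : α | Tendsto (fun n => infDist p (s n)) atTop (𝓝 0)} := by
  refine isClosed_of_closure_subset fun p hp => tendsto_order.2 ⟨?_, fun ε hε => ?_⟩
  · exact fun a ha => Eventually.of_forall fun _ => ha.trans_le infDist_nonneg
  obtain ⟨q, hq, hpq⟩ := mem_closure_iff.1 hp (ε / 2) (half_pos hε)
  filter_upwards [(tendsto_order.1 hq).2 (ε / 2) (half_pos hε)] with n hn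
  calc infDist p (s n) ≤ infDist q (s n) + dist p q := infDist_le_infDist_add_dist
    _ < ε / 2 + ε / 2 := add_lt_add hn hpq
    _ = ε := add_halves ε

theorem isClosed_setOf_exists_tendsto_mem (hs : ∀ n, (s n).Nonempty) :
    IsClosed {p : α | ∃ u : ℕ → α, (∀ n, u n ∈ s n) ∧ Tendsto u atTop (𝓝 p)} := by
  simpa only [exists_tendsto_mem_iff_tendsto_infDist hs] using isClosed_setOf_tendsto_infDist

end LowerLimit

section Submodule

variable {R M N : Type*} [Ring R] [AddCommGroup M] [AddCommGroup N] [Module R M] [Module R N]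

theorem Submodule.setOf_forall_prod_mem_eq_comap_inl (G : Submodule R (M × N)) {x₀ : M}
    (hx₀ : ∀ y, (x₀, y) ∈ G) :
    {x | ∀ y, (x, y) ∈ G} = G.comap (LinearMap.inl R M N) := by
  ext x
  refine ⟨fun hx => hx 0, fun hx y => ?_⟩
  have hxy : (x, y) = (x, 0) + ((x₀, y) - (x₀, 0)) := by simp
  rw [hxy]
  exact G.add_mem hx (G.sub_mem (hx₀ y) (hx₀ 0))

end Submodule

section Jmix

variable {X : Type*} [SeminormedAddCommGroup X] [NormedSpace ℂ X] (T : X →L[ℂ] X)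

theorem zero_mem_Jmix_zero : (0 : X) ∈ Jmix T 0 :=
  ⟨fun _ => 0, tendsto_const_nhds, by simpa using tendsto_const_nhds⟩

variable {T}

theorem add_mem_Jmix_add {x x' y y' : X} (h : y ∈ Jmix T x) (h' : y' ∈ Jmix T x') :
    y + y' ∈ Jmix T (x + x') := by
  obtain ⟨u, hu, hTu⟩ := h
  obtain ⟨v, hv, hTv⟩ := h'
  exact ⟨u + v, hu.add hv, by simpa only [Pi.add_apply, map_add] using hTu.add hTv⟩

theorem smul_mem_Jmix_smul {x y : X} (c : ℂ) (h : y ∈ Jmix T x) : c • y ∈ Jmix T (c • x) := by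
  obtain ⟨u, hu, hTu⟩ := h
  exact ⟨c • u, hu.const_smul c, by simpa only [Pi.smul_apply, map_smul] using hTu.const_smul c⟩

theorem mem_Jmix_iff_exists_tendsto_mem_graph {x y : X} :
    y ∈ Jmix T x ↔ ∃ w : ℕ → X × X, (∀ n, w n ∈ {q : X × X | q.2 = (T ^ n) q.1}) ∧
      Tendsto w atTop (𝓝 (x, y)) := by
  constructor
  · rintro ⟨u, hu, hTu⟩
    exact ⟨fun n => (u n, (T ^ n) (u n)), fun _ => rfl, hu.prodMk_nhds hTu⟩
  · rintro ⟨w, hw, hwt⟩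
    refine ⟨fun n => (w n).1, hwt.fst_nhds, ?_⟩
    simpa only [← show ∀ n, (w n).2 = (T ^ n) (w n).1 from hw] using hwt.snd_nhds

variable (T)

noncomputable def jmixGraph : Submodule ℂ (X × X) where
  carrier := {p | p.2 ∈ Jmix T p.1}
  add_mem' := add_mem_Jmix_add
  zero_mem' := zero_mem_Jmix_zero T
  smul_mem' c _ := smul_mem_Jmix_smul c

@[simp]
theorem mem_jmixGraph {p : X × X} : p ∈ jmixGraph T ↔ p.2 ∈ Jmix T p.1 :=
  Iff.rfl

theorem isClosed_jmixGraph : IsClosed (jmixGraph T : Set (X × X)) := by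
  have hne : ∀ n, {q : X × X | q.2 = (T ^ n) q.1}.Nonempty := fun n => ⟨0, by simp⟩
  have hG : (jmixGraph T : Set (X × X)) = {p | ∃ w : ℕ → X × X,
      (∀ n, w n ∈ {q : X × X | q.2 = (T ^ n) q.1}) ∧ Tendsto w atTop (𝓝 p)} :=
    Set.ext fun _ => mem_Jmix_iff_exists_tendsto_mem_graph
  rw [hG]
  exact isClosed_setOf_exists_tendsto_mem hne

end Jmix

theorem stmt19_general {X : Type*} [NormedAddCommGroup X] [NormedSpace ℂ X]
    (T : X →L[ℂ] X) (hT : ∃ x : X, x ≠ 0 ∧ Jmix T x = Set.univ) :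
    ∃ S : Submodule ℂ X, (S : Set X) = {x : X | Jmix T x = Set.univ} ∧
      IsClosed (S : Set X) := by
  obtain ⟨x₀, -, hx₀⟩ := hT
  have hA : {x : X | Jmix T x = Set.univ} = {x | ∀ y, (x, y) ∈ jmixGraph T} := by
    simp only [mem_jmixGraph, Set.eq_univ_iff_forall]
  refine ⟨(jmixGraph T).comap (LinearMap.inl ℂ X X), ?_, ?_⟩
  · rw [hA, (jmixGraph T).setOf_forall_prod_mem_eq_comap_inl (x₀ := x₀) (by simp [hx₀])]
  · exact (isClosed_jmixGraph T).preimage (continuous_id.prodMk continuous_const)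

/-- If `T` is a `J^mix`-class operator, then `A_T^mix = {x : J_T^mix(x) = X}` is a
closed linear subspace of `X`. -/
theorem stmt19 {X : Type*} [NormedAddCommGroup X] [NormedSpace ℂ X] [CompleteSpace X]
    (T : X →L[ℂ] X) (hT : ∃ x : X, x ≠ 0 ∧ Jmix T x = Set.univ) :
    ∃ S : Submodule ℂ X, (S : Set X) = {x : X | Jmix T x = Set.univ} ∧
      IsClosed (S : Set X) :=
  stmt19_general T hT
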